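/- arXiv:1201.5856 — 3 statements merged into one kernel-verified Lean document; each statement's English description precedes it below -/
import Mathlib

section
/- Let B : [0,1] → ℝ be a C¹ function with B(0) ≥ 0, and suppose there is a function A : [0,1] → ℝ with 0 ≤ A(t) ≤ σ²t for all t, where 0 ≤ σ < 2, and B satisfies the ODE B'(t) = 4B(t)/(A(t)+B(t)) whenever A(t)+B(t) > 0. Then B(1) ≤ 4 + B(0), and if additionally 4 - σ² > 0 and B(0) > 0, then B(t) ≥ (4-σ²)t for all t ∈ [0,1]. -/
/-!
Both bounds come from fencing `B` by affine barriers. Where `B` touches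
`B 0 + ε + (4 + ε) t` from below, `B > 0`, so `B' = 4B/(A+B) ≤ 4 < 4 + ε` and `B` stays below.
Where `B` touches `B 0 + κ t` (`0 ≤ κ < 4 - σ²`) from above, `A ≤ σ² t` forces `B' > κ`.
Letting `ε → 0` and `κ → 4 - σ²` gives the two estimates.
-/

open Set Topology

/-- Unlike Mathlib's `image_le_of_liminf_slope_right_lt_deriv_boundary'`, this asks for the
derivative of `f` only at the points where `f` touches the barrier `g`. -/
theorem image_le_of_hasDerivAt_lt_deriv_boundary {f g g' : ℝ → ℝ} {a b : ℝ}
    (hf : ContinuousOn f (Icc a b)) (hg : ContinuousOn g (Icc a b))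
    (hg' : ∀ x ∈ Ico a b, HasDerivWithinAt g (g' x) (Ici x) x) (ha : f a ≤ g a)
    (bound : ∀ x ∈ Ico a b, f x = g x → ∃ d < g' x, HasDerivAt f d x) :
    ∀ ⦃x⦄, x ∈ Icc a b → f x ≤ g x := by
  change Icc a b ⊆ {x | f x ≤ g x}
  have hfg : ContinuousOn (fun x => (f x, g x)) (Icc a b) := hf.prodMk hg
  have hclosed : IsClosed ({x | f x ≤ g x} ∩ Icc a b) := by
    rw [inter_comm]
    exact hfg.preimage_isClosed_of_isClosed isClosed_Icc OrderClosedTopology.isClosed_le'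
  refine hclosed.Icc_subset_of_forall_exists_gt ha fun x ⟨hle, hx⟩ y hy => ?_
  rcases (show f x ≤ g x from hle).lt_or_eq with hlt | heq
  · have hnear : ∀ᶠ z in 𝓝[Icc a b] x, f z < g z :=
      hfg x (Ico_subset_Icc_self hx) (isOpen_lt continuous_fst continuous_snd |>.mem_nhds hlt)
    have hright : ∀ᶠ z in 𝓝[>] x, f z < g z := nhdsWithin_le_of_mem (Icc_mem_nhdsGT_of_mem hx) hnear
    exact ((hright.and (Ioc_mem_nhdsGT hy)).mono fun z hz => ⟨hz.1.le, hz.2⟩).exists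
  · obtain ⟨d, hd, hfd⟩ := bound x hx heq
    have hslope : ∀ᶠ z in 𝓝[>] x, 0 < slope (g - f) x z :=
      (hasDerivWithinAt_iff_tendsto_slope' (lt_irrefl x)).1
        ((hg' x hx).sub hfd.hasDerivWithinAt).Ioi_of_Ici (Ioi_mem_nhds (sub_pos.2 hd))
    obtain ⟨z, hz, hzy⟩ := (hslope.and (Ioc_mem_nhdsGT hy)).exists
    refine ⟨z, ?_, hzy⟩
    rw [slope_def_field, Pi.sub_apply, Pi.sub_apply, heq, sub_self, sub_zero,
      div_pos_iff_of_pos_right (sub_pos.2 hzy.1)] at hz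
    exact sub_nonneg.1 hz.le

theorem image_ge_of_hasDerivAt_gt_deriv_boundary {f g g' : ℝ → ℝ} {a b : ℝ}
    (hf : ContinuousOn f (Icc a b)) (hg : ContinuousOn g (Icc a b))
    (hg' : ∀ x ∈ Ico a b, HasDerivWithinAt g (g' x) (Ici x) x) (ha : g a ≤ f a)
    (bound : ∀ x ∈ Ico a b, f x = g x → ∃ d > g' x, HasDerivAt f d x) :
    ∀ ⦃x⦄, x ∈ Icc a b → g x ≤ f x := fun x hx =>
  neg_le_neg_iff.1 <|
    image_le_of_hasDerivAt_lt_deriv_boundary (f := -f) (g := -g) (g' := -g') hf.neg hg.neg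
      (fun x hx => (hg' x hx).neg) (neg_le_neg ha)
      (fun x hx hfg => by
        obtain ⟨d, hd, hfd⟩ := bound x hx (neg_inj.1 hfg)
        exact ⟨-d, neg_lt_neg hd, hfd.neg⟩)
      hx

theorem hasDerivWithinAt_affine (c k x : ℝ) (s : Set ℝ) :
    HasDerivWithinAt (fun t => c + k * t) k s x := by
  simpa using ((hasDerivWithinAt_id x s).const_mul k).const_add c

namespace LoewnerODE

variable {A B : ℝ → ℝ} {σ T : ℝ}

theorem le_upper_barrier (hB : ContinuousOn B (Icc 0 T)) (hB0 : 0 ≤ B 0)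
    (hA : ∀ t ∈ Icc 0 T, 0 ≤ A t)
    (hODE : ∀ t ∈ Icc 0 T, 0 < A t + B t → HasDerivAt B (4 * B t / (A t + B t)) t)
    {ε : ℝ} (hε : 0 < ε) : ∀ t ∈ Icc 0 T, B t ≤ B 0 + ε + (4 + ε) * t := by
  refine image_le_of_hasDerivAt_lt_deriv_boundary hB (by fun_prop)
    (fun t _ => hasDerivWithinAt_affine _ _ t _) (by linarith) fun t ht htouch => ?_
  have ht' : t ∈ Icc 0 T := Ico_subset_Icc_self ht
  have hBpos : 0 < B t := by nlinarith [ht.1]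
  have hABpos : 0 < A t + B t := by linarith [hA t ht']
  refine ⟨_, ?_, hODE t ht' hABpos⟩
  have : 4 * B t / (A t + B t) ≤ 4 := by
    rw [div_le_iff₀ hABpos]
    linarith [hA t ht']
  linarith

theorem lower_barrier_le (hB : ContinuousOn B (Icc 0 T)) (hB0 : 0 < B 0)
    (hA : ∀ t ∈ Icc 0 T, 0 ≤ A t ∧ A t ≤ σ ^ 2 * t)
    (hODE : ∀ t ∈ Icc 0 T, 0 < A t + B t → HasDerivAt B (4 * B t / (A t + B t)) t)
    {κ : ℝ} (hκ0 : 0 ≤ κ) (hκ : κ < 4 - σ ^ 2) : ∀ t ∈ Icc 0 T, B 0 + κ * t ≤ B t := by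
  refine image_ge_of_hasDerivAt_gt_deriv_boundary hB (by fun_prop)
    (fun t _ => hasDerivWithinAt_affine _ _ t _) (by simp) fun t ht htouch => ?_
  have ht' : t ∈ Icc 0 T := Ico_subset_Icc_self ht
  obtain ⟨hA0, hAσ⟩ := hA t ht'
  have hBpos : 0 < B t := by nlinarith [ht.1]
  have hABpos : 0 < A t + B t := by linarith
  refine ⟨_, ?_, hODE t ht' hABpos⟩
  rw [gt_iff_lt, lt_div_iff₀ hABpos]
  nlinarith [mul_nonneg hκ0 ht.1, mul_le_mul_of_nonneg_left hAσ hκ0]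

end LoewnerODE

theorem stmt_0_general (A B : ℝ → ℝ) (σ : ℝ)
    (hB0 : 0 ≤ B 0) (hBC1 : ContDiffOn ℝ 1 B (Set.Icc 0 1))
    (hA : ∀ t ∈ Set.Icc (0:ℝ) 1, 0 ≤ A t ∧ A t ≤ σ ^ 2 * t)
    (hODE : ∀ t ∈ Set.Icc (0:ℝ) 1, 0 < A t + B t →
      HasDerivAt B (4 * B t / (A t + B t)) t) :
    B 1 ≤ 4 + B 0 ∧
      (0 < 4 - σ ^ 2 → 0 < B 0 → ∀ t ∈ Set.Icc (0:ℝ) 1, (4 - σ ^ 2) * t ≤ B t) := by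
  have hB := hBC1.continuousOn
  refine ⟨le_of_forall_pos_le_add fun ε hε => ?_, fun hσ hB0' t ht => ?_⟩
  · have := LoewnerODE.le_upper_barrier hB hB0 (fun t ht => (hA t ht).1) hODE (half_pos hε) 1
      ⟨zero_le_one, le_rfl⟩
    linarith
  · refine le_of_forall_pos_le_add fun η hη => ?_
    set κ := max 0 (4 - σ ^ 2 - η)
    have hbarrier : B 0 + κ * t ≤ B t :=
      LoewnerODE.lower_barrier_le hB hB0' hA hODE (le_max_left _ _) (max_lt hσ (by linarith)) t ht
    have hgap : 4 - σ ^ 2 - κ ≤ η := by linarith [le_max_right 0 (4 - σ ^ 2 - η)]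
    linarith [mul_le_mul_of_nonneg_right hgap ht.1, mul_le_of_le_one_right hη.le ht.2]

/-- ODE comparison lemma behind the bound `4 - σ² ≤ (Im γ(1))² ≤ 4` for the tip of a
Loewner slit with σ-Lip(1/2) driving function. -/
theorem stmt_0 (A B : ℝ → ℝ) (σ : ℝ) (hσ0 : 0 ≤ σ) (hσ2 : σ < 2)
    (hB0 : 0 ≤ B 0) (hBC1 : ContDiffOn ℝ 1 B (Set.Icc 0 1))
    (hA : ∀ t ∈ Set.Icc (0:ℝ) 1, 0 ≤ A t ∧ A t ≤ σ ^ 2 * t)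
    (hODE : ∀ t ∈ Set.Icc (0:ℝ) 1, 0 < A t + B t →
      HasDerivAt B (4 * B t / (A t + B t)) t) :
    B 1 ≤ 4 + B 0 ∧
      (0 < 4 - σ ^ 2 → 0 < B 0 → ∀ t ∈ Set.Icc (0:ℝ) 1, (4 - σ ^ 2) * t ≤ B t) :=
  stmt_0_general A B σ hB0 hBC1 hA hODE
end

section
/- Let λ : [0,1] → ℝ satisfy λ(0) = 0 and |λ(t₁)-λ(t₂)| ≤ σ|t₁-t₂|^(1/2) for all t₁,t₂, with 0 ≤ σ < 4, and let γ = γ^λ be the generated Loewner slit parametrized by half-plane capacity. Then |Re γ(1)| ≤ σ and 4 - σ² ≤ (Im γ(1))² ≤ 4. -/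
open Set

/-- The chordal Loewner data of a slit `γ` with driving function `lam` on `[0,T]`:
`g t` is the hydrodynamically normalized conformal map from
`H_t = ℍ \ γ([0,t])` onto the upper half-plane `ℍ`, with spatial derivative `g'` and
inverse `f`, and `γ` is parametrized by half-plane capacity (`hcap = 2t`, which is
encoded by the factor `2` in the Loewner ODE). -/
structure LoewnerData (T : ℝ) (lam : ℝ → ℝ) (γ : ℝ → ℂ) (g g' f : ℝ → ℂ → ℂ) : Prop where
  T_pos : 0 < T
  lam_cont : ContinuousOn lam (Icc 0 T)
  -- γ is a slit: a simple curve in the closed upper half-plane, meeting ℝ only at γ(0)=λ(0)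
  slit_cont : ContinuousOn γ (Icc 0 T)
  slit_inj : InjOn γ (Icc 0 T)
  slit_base : γ 0 = (lam 0 : ℂ)
  slit_im_pos : ∀ t, 0 < t → t ≤ T → 0 < (γ t).im
  -- initial condition of the flow
  flow_init : ∀ z, g 0 z = z
  -- the chordal Loewner differential equation ∂ₜ g = 2/(g - λ)
  flow_ode : ∀ t ∈ Icc (0:ℝ) T, ∀ z ∈ {w : ℂ | 0 < w.im} \ γ '' Icc 0 t,
    HasDerivAt (fun s => g s z) (2 / (g t z - (lam t : ℂ))) t
  -- g t is a bijection from H_t onto ℍ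
  flow_bij : ∀ t ∈ Icc (0:ℝ) T,
    BijOn (g t) ({w : ℂ | 0 < w.im} \ γ '' Icc 0 t) {w : ℂ | 0 < w.im}
  -- g' is the spatial (complex) derivative of g
  flow_deriv : ∀ t ∈ Icc (0:ℝ) T, ∀ z ∈ {w : ℂ | 0 < w.im} \ γ '' Icc 0 t,
    HasDerivAt (g t) (g' t z) z
  -- f t is the inverse conformal map
  flow_inv : ∀ t ∈ Icc (0:ℝ) T, ∀ z ∈ {w : ℂ | 0 < w.im} \ γ '' Icc 0 t,
    f t (g t z) = z
  -- hydrodynamic normalization: g t (z) - z → 0 as z → ∞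
  hydro : ∀ t ∈ Icc (0:ℝ) T, Filter.Tendsto (fun y : ℝ => g t (y * Complex.I) - y * Complex.I)
    Filter.atTop (nhds 0)
  -- the tip of the slit: γ(t) = lim_{y↓0} f_t(λ(t) + iy)
  tip : ∀ t ∈ Icc (0:ℝ) T, Filter.Tendsto (fun y : ℝ => f t ((lam t : ℂ) + y * Complex.I))
    (nhdsWithin 0 (Ioi 0)) (nhds (γ t))

/-!
Reversing time turns the Loewner flow into the backward equation `h' = -2 / (h - ξ)`,
`ξ(s) = λ(1 - s)`, which carries `λ(1) + iy` to the preimage `f₁(λ(1) + iy)`; this tends to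
`γ(1)` as `y ↓ 0`. Along `h`, with `D = |h - ξ|²`,
`(Re h)' = -2 (Re h - ξ) / D` and `((Im h)²)' = 4 (Im h)² / D`.
The first equation pulls `Re h` towards `ξ`, so `Re h(s)` stays within the range of `ξ` on
`[0, s]`, whence `(Re h - ξ)² ≤ σ² s`. Since `D ≥ (Im h)²`, the square of the imaginary part
grows at rate at most `4`; since `D ≤ σ² s + (Im h)²`, it cannot cross the line `k s` from above
when `k < 4 - σ²`.
-/

open Filter Topology Complex ComplexConjugate

theorem image_le_of_deriv_right_neg_of_gt {x x' : ℝ → ℝ} {a b M : ℝ}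
    (hx : ContinuousOn x (Icc a b))
    (hx' : ∀ s ∈ Ico a b, HasDerivWithinAt x (x' s) (Ici s) s)
    (ha : x a ≤ M) (hneg : ∀ s ∈ Ico a b, M < x s → x' s < 0) :
    ∀ s ∈ Icc a b, x s ≤ M := by
  intro s hs
  refine le_of_forall_pos_le_add fun ε hε => ?_
  refine image_le_of_deriv_right_lt_deriv_boundary hx hx' (B := fun _ => M + ε)
    (B' := fun _ => 0) (by linarith) (fun _ => hasDerivAt_const _ _) ?_ hs
  intro t ht hxt
  exact hneg t ht (by linarith [show x t = M + ε from hxt])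

theorem Complex.normSq_sub_ofReal (z : ℂ) (a : ℝ) :
    normSq (z - a) = (z.re - a) ^ 2 + z.im ^ 2 := by
  simp only [normSq_apply, sub_re, sub_im, ofReal_re, ofReal_im, sub_zero]
  ring

structure IsBackwardLoewnerFlow (T : ℝ) (ξ : ℝ → ℝ) (h : ℝ → ℂ) : Prop where
  im_pos : ∀ s ∈ Icc 0 T, 0 < (h s).im
  hasDerivAt : ∀ s ∈ Icc 0 T, HasDerivAt h (-(2 / (h s - ξ s))) s

namespace IsBackwardLoewnerFlow

variable {T : ℝ} {ξ : ℝ → ℝ} {h : ℝ → ℂ}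

theorem continuousOn (hh : IsBackwardLoewnerFlow T ξ h) : ContinuousOn h (Icc 0 T) :=
  fun s hs => (hh.hasDerivAt s hs).continuousAt.continuousWithinAt

theorem normSq_sub_pos (hh : IsBackwardLoewnerFlow T ξ h) {s : ℝ} (hs : s ∈ Icc 0 T) :
    0 < normSq (h s - ξ s) := by
  rw [normSq_sub_ofReal]
  have := hh.im_pos s hs
  positivity

theorem hasDerivAt_re (hh : IsBackwardLoewnerFlow T ξ h) {s : ℝ} (hs : s ∈ Icc 0 T) :
    HasDerivAt (fun t => (h t).re) (-(2 * ((h s).re - ξ s) / normSq (h s - ξ s))) s := by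
  refine (reCLM.hasFDerivAt.comp_hasDerivAt s (hh.hasDerivAt s hs)).congr_deriv ?_
  simp [div_re]

theorem hasDerivAt_im_sq (hh : IsBackwardLoewnerFlow T ξ h) {s : ℝ} (hs : s ∈ Icc 0 T) :
    HasDerivAt (fun t => (h t).im ^ 2) (4 * (h s).im ^ 2 / normSq (h s - ξ s)) s := by
  have him : HasDerivAt (fun t => (h t).im) (2 * (h s).im / normSq (h s - ξ s)) s := by
    refine (imCLM.hasFDerivAt.comp_hasDerivAt s (hh.hasDerivAt s hs)).congr_deriv ?_
    simp [div_im]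
  refine (him.pow 2).congr_deriv ?_
  simp only [Nat.cast_ofNat, Nat.add_one_sub_one, pow_one]
  ring

theorem reflect (hh : IsBackwardLoewnerFlow T ξ h) :
    IsBackwardLoewnerFlow T (-ξ) (fun s => -conj (h s)) where
  im_pos s hs := by simpa using hh.im_pos s hs
  hasDerivAt s hs := by
    refine ((hh.hasDerivAt s hs).star).neg.congr_deriv ?_
    rw [Pi.neg_apply, ofReal_neg, show -conj (h s) - -(ξ s : ℂ) = -(conj (h s) - ξ s) by ring,
      div_neg, neg_neg]
    simp

theorem re_le_of_forall_le (hh : IsBackwardLoewnerFlow T ξ h) {M s : ℝ} (hs : s ∈ Icc 0 T)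
    (h0 : (h 0).re ≤ M) (hξ : ∀ t ∈ Icc 0 s, ξ t ≤ M) : (h s).re ≤ M := by
  have hsub : Icc 0 s ⊆ Icc 0 T := Icc_subset_Icc_right hs.2
  refine image_le_of_deriv_right_neg_of_gt
    (continuous_re.comp_continuousOn (hh.continuousOn.mono hsub))
    (fun t ht => (hh.hasDerivAt_re (hsub (Ico_subset_Icc_self ht))).hasDerivWithinAt) h0
    (fun t ht hMt => ?_) s (right_mem_Icc.2 hs.1)
  have : 0 < 2 * ((h t).re - ξ t) / normSq (h t - ξ t) :=
    div_pos (by linarith [hξ t (Ico_subset_Icc_self ht), show M < (h t).re from hMt])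
      (hh.normSq_sub_pos (hsub (Ico_subset_Icc_self ht)))
  linarith

theorem abs_re_sub_le (hh : IsBackwardLoewnerFlow T ξ h) {m s : ℝ} (hs : s ∈ Icc 0 T)
    (h0 : (h 0).re = ξ 0) (hξ : ∀ t ∈ Icc 0 s, |ξ t - ξ s| ≤ m) : |(h s).re - ξ s| ≤ m := by
  have hξ0 := abs_le.1 (hξ 0 (left_mem_Icc.2 hs.1))
  refine abs_le.2 ⟨?_, ?_⟩
  · have := hh.reflect.re_le_of_forall_le (M := m - ξ s) hs
      (by simp only [neg_re, conj_re, h0]; linarith)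
      (fun t ht => by simp only [Pi.neg_apply]; linarith [(abs_le.1 (hξ t ht)).1])
    simp only [neg_re, conj_re] at this
    linarith
  · have := hh.re_le_of_forall_le (M := ξ s + m) hs (by linarith)
      (fun t ht => by linarith [(abs_le.1 (hξ t ht)).2])
    linarith

theorem re_sub_sq_le (hh : IsBackwardLoewnerFlow T ξ h) {σ : ℝ} (hσ : 0 ≤ σ)
    (hξ : ∀ s₁ ∈ Icc 0 T, ∀ s₂ ∈ Icc 0 T, |ξ s₁ - ξ s₂| ≤ σ * √|s₁ - s₂|)
    (h0 : (h 0).re = ξ 0) {s : ℝ} (hs : s ∈ Icc 0 T) : ((h s).re - ξ s) ^ 2 ≤ σ ^ 2 * s := by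
  have hre : |(h s).re - ξ s| ≤ σ * √s := by
    refine hh.abs_re_sub_le hs h0 fun t ht => (hξ t ⟨ht.1, ht.2.trans hs.2⟩ s hs).trans ?_
    gcongr
    exact abs_le.2 ⟨by linarith [ht.1], by linarith [ht.2, hs.1]⟩
  calc ((h s).re - ξ s) ^ 2 = |(h s).re - ξ s| ^ 2 := (sq_abs _).symm
    _ ≤ (σ * √s) ^ 2 := by gcongr
    _ = σ ^ 2 * s := by rw [mul_pow, Real.sq_sqrt hs.1]

theorem im_sq_le (hh : IsBackwardLoewnerFlow T ξ h) {s : ℝ} (hs : s ∈ Icc 0 T) :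
    (h s).im ^ 2 ≤ (h 0).im ^ 2 + 4 * s := by
  have hrate : ∀ t ∈ Icc 0 T, 4 * (h t).im ^ 2 / normSq (h t - ξ t) ≤ 4 := fun t ht => by
    rw [div_le_iff₀ (hh.normSq_sub_pos ht), normSq_sub_ofReal]
    nlinarith [sq_nonneg ((h t).re - ξ t)]
  have := image_le_of_deriv_right_le_deriv_boundary (f := fun t => (h t).im ^ 2)
    (B := fun t => (h 0).im ^ 2 + t * 4)
    ((continuous_im.comp_continuousOn hh.continuousOn).pow 2)
    (fun t ht => (hh.hasDerivAt_im_sq (Ico_subset_Icc_self ht)).hasDerivWithinAt)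
    (by simp) (by fun_prop) (fun t _ => ((hasDerivAt_mul_const 4).const_add _).hasDerivWithinAt)
    (fun t ht => hrate t (Ico_subset_Icc_self ht)) hs
  linarith

theorem mul_le_im_sq (hh : IsBackwardLoewnerFlow T ξ h) {c : ℝ}
    (hre : ∀ s ∈ Icc 0 T, ((h s).re - ξ s) ^ 2 ≤ c * s) {s : ℝ} (hs : s ∈ Icc 0 T) :
    (4 - c) * s ≤ (h s).im ^ 2 := by
  have hsub : Icc 0 s ⊆ Icc 0 T := Icc_subset_Icc_right hs.2
  have hline : ∀ k < 4 - c, k * s ≤ (h s).im ^ 2 := by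
    intro k hk
    rcases le_or_gt k 0 with hk0 | hk0
    · nlinarith [hs.1, sq_nonneg (h s).im]
    refine image_le_of_deriv_right_lt_deriv_boundary' (f := fun t => k * t) (f' := fun _ => k)
      (B := fun t => (h t).im ^ 2)
      (by fun_prop)
      (fun t _ => ((hasDerivAt_id t).const_mul k).hasDerivWithinAt.congr_deriv (mul_one k))
      (by simp only [mul_zero]; positivity)
      ((continuous_im.comp_continuousOn (hh.continuousOn.mono hsub)).pow 2)
      (fun t ht => (hh.hasDerivAt_im_sq (hsub (Ico_subset_Icc_self ht))).hasDerivWithinAt)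
      ?_ (right_mem_Icc.2 hs.1)
    intro t ht hcontact
    have ht' := hsub (Ico_subset_Icc_self ht)
    have htpos : 0 < t := by
      rcases ht.1.eq_or_lt with rfl | htpos
      · nlinarith [hh.im_pos 0 ht']
      · exact htpos
    have hD : normSq (h t - ξ t) ≤ (c + k) * t := by
      rw [normSq_sub_ofReal, ← hcontact]
      linarith [hre t ht']
    rw [lt_div_iff₀ (hh.normSq_sub_pos ht'), ← hcontact]
    nlinarith [mul_pos hk0 htpos]
  exact le_of_tendsto (((continuous_mul_const s).tendsto _).mono_left nhdsWithin_le_nhds)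
    (eventually_nhdsWithin_of_forall hline : ∀ᶠ k in 𝓝[<] (4 - c), k * s ≤ (h s).im ^ 2)

end IsBackwardLoewnerFlow

namespace LoewnerData

variable {T : ℝ} {lam : ℝ → ℝ} {γ : ℝ → ℂ} {g g' f : ℝ → ℂ → ℂ}

theorem isBackwardLoewnerFlow (hL : LoewnerData T lam γ g g' f) {z : ℂ}
    (hz : z ∈ {w : ℂ | 0 < w.im} \ γ '' Icc 0 T) :
    IsBackwardLoewnerFlow T (fun s => lam (T - s)) (fun s => g (T - s) z) := by
  have hmem : ∀ s ∈ Icc 0 T, T - s ∈ Icc 0 T := fun s hs =>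
    ⟨by linarith [hs.2], by linarith [hs.1]⟩
  have hdom : ∀ s ∈ Icc 0 T, z ∈ {w : ℂ | 0 < w.im} \ γ '' Icc 0 (T - s) := fun s hs =>
    ⟨hz.1, fun hγ => hz.2 (image_mono (Icc_subset_Icc_right (by linarith [hs.1])) hγ)⟩
  exact
    { im_pos := fun s hs => (hL.flow_bij _ (hmem s hs)).mapsTo (hdom s hs)
      hasDerivAt := fun s hs => (hL.flow_ode _ (hmem s hs) z (hdom s hs)).comp_const_sub T s }

theorem preimage_estimates (hL : LoewnerData T lam γ g g' f) {σ : ℝ} (hσ : 0 ≤ σ)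
    (hLip : ∀ t₁ ∈ Icc (0:ℝ) T, ∀ t₂ ∈ Icc (0:ℝ) T,
      |lam t₁ - lam t₂| ≤ σ * |t₁ - t₂| ^ ((1:ℝ)/2))
    {y : ℝ} (hy : 0 < y) :
    ((f T (lam T + y * I)).re - lam 0) ^ 2 ≤ σ ^ 2 * T ∧
      (4 - σ ^ 2) * T ≤ (f T (lam T + y * I)).im ^ 2 ∧
      (f T (lam T + y * I)).im ^ 2 ≤ y ^ 2 + 4 * T := by
  have hT : T ∈ Icc 0 T := right_mem_Icc.2 hL.T_pos.le
  obtain ⟨z, hz, hgz⟩ := (hL.flow_bij T hT).surjOn (show lam T + y * I ∈ {w : ℂ | 0 < w.im} by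
    simpa using hy)
  rw [← hgz, hL.flow_inv T hT z hz]
  have hh := hL.isBackwardLoewnerFlow hz
  have hξ : ∀ s₁ ∈ Icc 0 T, ∀ s₂ ∈ Icc 0 T,
      |lam (T - s₁) - lam (T - s₂)| ≤ σ * √|s₁ - s₂| := fun s₁ hs₁ s₂ hs₂ => by
    rw [Real.sqrt_eq_rpow, abs_sub_comm s₁, show s₂ - s₁ = (T - s₁) - (T - s₂) by ring]
    exact hLip _ ⟨by linarith [hs₁.2], by linarith [hs₁.1]⟩ _
      ⟨by linarith [hs₂.2], by linarith [hs₂.1]⟩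
  have hre := fun s (hs : s ∈ Icc 0 T) => hh.re_sub_sq_le hσ hξ (by simp [hgz]) hs
  refine ⟨?_, ?_, ?_⟩
  · simpa [hL.flow_init] using hre T hT
  · simpa [hL.flow_init] using hh.mul_le_im_sq hre hT
  · simpa [hL.flow_init, hgz] using hh.im_sq_le hT

theorem tip_estimates (hL : LoewnerData T lam γ g g' f) {σ : ℝ} (hσ : 0 ≤ σ)
    (hLip : ∀ t₁ ∈ Icc (0:ℝ) T, ∀ t₂ ∈ Icc (0:ℝ) T,
      |lam t₁ - lam t₂| ≤ σ * |t₁ - t₂| ^ ((1:ℝ)/2)) :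
    ((γ T).re - lam 0) ^ 2 ≤ σ ^ 2 * T ∧ (4 - σ ^ 2) * T ≤ (γ T).im ^ 2 ∧
      (γ T).im ^ 2 ≤ 4 * T := by
  have htip := hL.tip T (right_mem_Icc.2 hL.T_pos.le)
  have hre := (((continuous_re.tendsto _).comp htip).sub_const (lam 0)).pow 2
  have him := ((continuous_im.tendsto _).comp htip).pow 2
  have hbound : Tendsto (fun y : ℝ => y ^ 2 + 4 * T) (𝓝[>] 0) (𝓝 (4 * T)) := by
    have : Continuous fun y : ℝ => y ^ 2 + 4 * T := by fun_prop
    exact (this.tendsto' 0 _ (by simp)).mono_left nhdsWithin_le_nhds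
  have hest : ∀ᶠ y in 𝓝[>] (0:ℝ), _ := eventually_nhdsWithin_of_forall fun y hy =>
    hL.preimage_estimates hσ hLip (mem_Ioi.1 hy)
  exact ⟨le_of_tendsto hre (hest.mono fun _ h => h.1),
    ge_of_tendsto him (hest.mono fun _ h => h.2.1),
    le_of_tendsto_of_tendsto him hbound (hest.mono fun _ h => h.2.2)⟩

end LoewnerData

theorem stmt_10_general (σ : ℝ) (hσ0 : 0 ≤ σ)
    (lam : ℝ → ℝ) (γ : ℝ → ℂ) (g g' f : ℝ → ℂ → ℂ)
    (hL : LoewnerData 1 lam γ g g' f)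
    (hlam0 : lam 0 = 0)
    (hLip : ∀ t₁ ∈ Icc (0:ℝ) 1, ∀ t₂ ∈ Icc (0:ℝ) 1,
      |lam t₁ - lam t₂| ≤ σ * |t₁ - t₂| ^ ((1:ℝ)/2)) :
    |(γ 1).re| ≤ σ ∧ 4 - σ ^ 2 ≤ (γ 1).im ^ 2 ∧ (γ 1).im ^ 2 ≤ 4 := by
  obtain ⟨hre, him_lower, him_upper⟩ := hL.tip_estimates hσ0 hLip
  rw [hlam0, sub_zero, mul_one] at hre
  exact ⟨abs_le_of_sq_le_sq hre hσ0, by simpa using him_lower, by simpa using him_upper⟩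

/-- For a σ-Lip(1/2) driving function on `[0,1]` with `λ(0) = 0` and `0 ≤ σ < 4`,
the tip of the generated slit satisfies `|Re γ(1)| ≤ σ` and `4 - σ² ≤ (Im γ(1))² ≤ 4`. -/
theorem stmt_10 (σ : ℝ) (hσ0 : 0 ≤ σ) (hσ4 : σ < 4)
    (lam : ℝ → ℝ) (γ : ℝ → ℂ) (g g' f : ℝ → ℂ → ℂ)
    (hL : LoewnerData 1 lam γ g g' f)
    (hlam0 : lam 0 = 0)
    (hLip : ∀ t₁ ∈ Icc (0:ℝ) 1, ∀ t₂ ∈ Icc (0:ℝ) 1,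
      |lam t₁ - lam t₂| ≤ σ * |t₁ - t₂| ^ ((1:ℝ)/2)) :
    |(γ 1).re| ≤ σ ∧ 4 - σ ^ 2 ≤ (γ 1).im ^ 2 ∧ (γ 1).im ^ 2 ≤ 4 :=
  stmt_10_general σ hσ0 lam γ g g' f hL hlam0 hLip
end

section
/- Suppose λ : [0,T] → ℝ satisfies ‖λ‖_{Lip(1/2)} ≤ 1 and |λ(t₁)-λ(t₂)| ≤ M|t₁-t₂|^(1/2+δ) with 0 < δ ≤ 1/2. Then |L(s)| ≤ cMs^δ/δ for all s ∈ [0,T], where L(s) = ∫₀ˢ [1/(2u) + 2/γ(s-u,s)²] du and c > 0 is an absolute constant. -/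
open Set Filter Topology MeasureTheory Complex

-- The sign condition of `diskExcess_deriv_neg`, normalized to `√v = 1`, with `w = Im p - 5/2`.
lemma one_le_barrier_poly (x w m : ℝ) (hm : m ^ 2 ≤ 1) (hc : x ^ 2 + w ^ 2 = 36/25) :
    1 ≤ (36/25 + 5/2 * w) * ((x - m) ^ 2 + (w + 5/2) ^ 2) + 4 * x ^ 2 - 4 * x * m
      - 4 * (w + 5/2) * w := by
  nlinarith [sq_nonneg (x - m), sq_nonneg (x + m), sq_nonneg (w + 6/5),
    mul_nonneg (sub_nonneg.2 hm) (sq_nonneg (w + 6/5))]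

lemma pow_three_le_barrier_poly {X Y R l : ℝ} (hR : 0 < R) (hl : l ^ 2 ≤ R ^ 2)
    (hc : X ^ 2 + (Y - 5/2 * R) ^ 2 = 36/25 * R ^ 2) :
    R ^ 3 ≤ 4 * R * X * (X - l) - 4 * R * Y * (Y - 5/2 * R)
      + (5/2 * (Y - 5/2 * R) + 36/25 * R) * ((X - l) ^ 2 + Y ^ 2) := by
  have h := one_le_barrier_poly (X / R) ((Y - 5/2 * R) / R) (l / R)
    (by rw [div_pow, div_le_one (by positivity)]; exact hl)
    (by field_simp; linarith)
  refine (mul_one (R ^ 3)).symm.le.trans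
    ((mul_le_mul_of_nonneg_left h (pow_pos hR 3).le).trans_eq ?_)
  field_simp
  ring

noncomputable def diskExcess (v : ℝ) (p : ℂ) : ℝ := p.re ^ 2 + (p.im - 5/2 * √v) ^ 2 - 36/25 * v

lemma sqrt_le_im_of_diskExcess_nonpos {v : ℝ} {p : ℂ} (hv : 0 ≤ v)
    (h : diskExcess v p ≤ 0) : √v ≤ p.im := by
  have hR : √v ^ 2 = v := Real.sq_sqrt hv
  unfold diskExcess at h
  nlinarith [sq_nonneg p.re, Real.sqrt_nonneg v]

lemma norm_le_of_diskExcess_nonpos {v : ℝ} {p : ℂ} (hv : 0 ≤ v)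
    (h : diskExcess v p ≤ 0) : ‖p‖ ≤ 4 * √v := by
  have hR : √v ^ 2 = v := Real.sq_sqrt hv
  have hp : ‖p‖ ^ 2 = p.re ^ 2 + p.im ^ 2 := by rw [Complex.sq_norm, normSq_apply]; ring
  unfold diskExcess at h
  have him : p.im ≤ 4 * √v := by nlinarith [sq_nonneg p.re, Real.sqrt_nonneg v]
  have : ‖p‖ ^ 2 ≤ (4 * √v) ^ 2 := by nlinarith [Real.sqrt_nonneg v]
  exact (pow_le_pow_iff_left₀ (norm_nonneg p) (by positivity) two_ne_zero).1 this

lemma diskExcess_nonpos_of_norm_sq_add_le {a : ℝ} {p : ℂ} (ha : 0 < a) (him : 0 ≤ p.im)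
    (h : ‖p ^ 2 + 4 * a‖ ≤ a) : diskExcess a p ≤ 0 := by
  set R := √a
  have hR : 0 < R := Real.sqrt_pos.2 ha
  have hRR : (R : ℂ) ^ 2 = a := by exact_mod_cast Real.sq_sqrt ha.le
  -- `p` is close to the root `2 R i` of `p ^ 2 + 4 a`, since it is far from the other root
  have hfactor : (p - 2 * R * I) * (p + 2 * R * I) = p ^ 2 + 4 * a := by
    linear_combination (-4 * (R : ℂ) ^ 2) * I_sq + 4 * hRR
  have hfar : 2 * R ≤ ‖p + 2 * R * I‖ :=
    le_trans (by simp; linarith) (im_le_norm _)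
  have hnear : ‖p - 2 * R * I‖ ≤ R / 2 := by
    have : ‖p - 2 * R * I‖ * ‖p + 2 * R * I‖ ≤ R ^ 2 := by
      rw [← norm_mul, hfactor, Real.sq_sqrt ha.le]; exact h
    nlinarith [norm_nonneg (p - 2 * R * I)]
  have hq : ‖p - 2 * R * I‖ ^ 2 = p.re ^ 2 + (p.im - 2 * R) ^ 2 := by
    rw [Complex.sq_norm, normSq_apply]; simp; ring
  have him' : |p.im - 2 * R| ≤ R / 2 := by
    simpa using (abs_im_le_norm (p - 2 * R * I)).trans hnear
  have hsq := pow_le_pow_left₀ (norm_nonneg _) hnear 2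
  unfold diskExcess
  nlinarith [Real.sq_sqrt ha.le, abs_le.1 him']

lemma hasDerivAt_diskExcess {P : ℝ → ℂ} {P' : ℂ} {v : ℝ} (hv : 0 < v) (hP : HasDerivAt P P' v) :
    HasDerivAt (fun v => diskExcess v (P v))
      (2 * (P v).re * P'.re + 2 * ((P v).im - 5/2 * √v) * (P'.im - 5 / (4 * √v)) - 36/25) v := by
  have hre : HasDerivAt (fun u => (P u).re) P'.re v := reCLM.hasFDerivAt.comp_hasDerivAt v hP
  have him : HasDerivAt (fun u => (P u).im) P'.im v := imCLM.hasFDerivAt.comp_hasDerivAt v hP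
  have hsqrt := Real.hasDerivAt_sqrt hv.ne'
  refine (((hre.pow 2).add ((him.sub (hsqrt.const_mul (5/2))).pow 2)).sub
    ((hasDerivAt_id v).const_mul (36/25))).congr_deriv ?_
  simp only [Pi.sub_apply]
  field_simp
  ring

lemma diskExcess_deriv_neg {p : ℂ} {l v : ℝ} (hv : 0 < v) (hl : |l| ≤ √v)
    (hp : diskExcess v p = 0) :
    2 * p.re * (-(2 / (p - l))).re
      + 2 * (p.im - 5/2 * √v) * ((-(2 / (p - l))).im - 5 / (4 * √v)) - 36/25 < 0 := by
  set R := √v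
  have hR : 0 < R := Real.sqrt_pos.2 hv
  have hRR : R ^ 2 = v := Real.sq_sqrt hv.le
  have him : 0 < p.im := hR.trans_le (sqrt_le_im_of_diskExcess_nonpos hv.le hp.le)
  set D := (p.re - l) ^ 2 + p.im ^ 2
  have hD : 0 < D := by positivity
  have hnormSq : normSq (p - l) = D := by simp [normSq_apply, D]; ring
  have hre : (-(2 / (p - l))).re = -(2 * (p.re - l) / D) := by
    simp [div_re, hnormSq]
  have him' : (-(2 / (p - l))).im = 2 * p.im / D := by
    simp [div_im, hnormSq]
  have hkey := pow_three_le_barrier_poly hR (sq_le_sq' (abs_le.1 hl).1 (abs_le.1 hl).2)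
    (X := p.re) (Y := p.im) (by unfold diskExcess at hp; linarith)
  rw [hre, him']
  have : (2 * p.re * -(2 * (p.re - l) / D) + 2 * (p.im - 5/2 * R) * (2 * p.im / D - 5 / (4 * R))
      - 36/25) * (R * D) = -(4 * R * p.re * (p.re - l) - 4 * R * p.im * (p.im - 5/2 * R)
        + (5/2 * (p.im - 5/2 * R) + 36/25 * R) * D) := by
    field_simp
    ring
  nlinarith [mul_pos hR hD, pow_pos hR 3]

lemma diskExcess_nonpos_of_hasDerivAt {P : ℝ → ℂ} {w : ℝ → ℝ} {a b : ℝ} (ha : 0 < a)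
    (hP : ∀ v ∈ Icc a b, HasDerivAt P (-(2 / (P v - w v))) v)
    (hw : ∀ v ∈ Icc a b, |w v| ≤ √v) (h₀ : diskExcess a (P a) ≤ 0) :
    ∀ v ∈ Icc a b, diskExcess v (P v) ≤ 0 := by
  have hpos : ∀ v ∈ Icc a b, 0 < v := fun v hv => ha.trans_le hv.1
  have hderiv := fun v (hv : v ∈ Icc a b) => hasDerivAt_diskExcess (hpos v hv) (hP v hv)
  refine image_le_of_deriv_right_lt_deriv_boundary' (B := 0) (B' := 0)
    (fun v hv => (hderiv v hv).continuousAt.continuousWithinAt)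
    (fun v hv => (hderiv v (Ico_subset_Icc_self hv)).hasDerivWithinAt) h₀ continuousOn_const
    (fun _ _ => hasDerivWithinAt_const _ _ _)
    (fun v hv hzero => diskExcess_deriv_neg (hpos v (Ico_subset_Icc_self hv))
      (hw v (Ico_subset_Icc_self hv)) hzero)

lemma one_div_two_mul_add_two_div_sq {h : ℂ} {u : ℝ} (hu : u ≠ 0) (h0 : h ≠ 0) :
    1 / (2 * (u : ℂ)) + 2 / h ^ 2 = (h ^ 2 + 4 * u) / (2 * u * h ^ 2) := by
  have : (u : ℂ) ≠ 0 := by exact_mod_cast hu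
  field_simp
  ring

lemma norm_add_sq_add_le_of_norm_lt {h : ℂ} {l a ε : ℝ} (ha : 0 < a) (h0 : h ≠ 0)
    (hε : ε ≤ 1/100) (hF : ‖1 / (2 * (a : ℂ)) + 2 / h ^ 2‖ < ε / a) (hl : |l| ≤ ε * √a) :
    ‖(h + l) ^ 2 + 4 * a‖ ≤ 15 * ε * a := by
  have hh : 0 < ‖h‖ := norm_pos_iff.2 h0
  have hE : ‖h ^ 2 + 4 * a‖ < 2 * ε * ‖h‖ ^ 2 := by
    rw [one_div_two_mul_add_two_div_sq ha.ne' h0, norm_div] at hF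
    simp only [norm_mul, norm_pow, Complex.norm_real, Complex.norm_ofNat,
      Real.norm_of_nonneg ha.le] at hF
    rw [div_lt_div_iff₀ (by positivity) ha] at hF
    nlinarith
  have h4a : ‖4 * (a : ℂ)‖ = 4 * a := by simp [ha.le]
  have hh5 : ‖h‖ ^ 2 ≤ 5 * a := by
    have := norm_sub_le (h ^ 2 + 4 * a) (4 * (a : ℂ))
    rw [add_sub_cancel_right, norm_pow, h4a] at this
    nlinarith
  have hh12 : ‖h‖ ≤ 12/5 * √a := by
    nlinarith [Real.sq_sqrt ha.le, Real.sqrt_nonneg a]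
  have hε0 : 0 ≤ ε := by
    have : 0 < ε / a := (norm_nonneg _).trans_lt hF
    exact (div_pos_iff_of_pos_right ha).1 this |>.le
  have hcross : ‖(l : ℂ) * (2 * h + l)‖ ≤ ε * √a * (5 * √a) := by
    rw [norm_mul, Complex.norm_real, Real.norm_eq_abs]
    refine mul_le_mul hl ((norm_add_le _ _).trans ?_) (norm_nonneg _) (by positivity)
    rw [norm_mul, Complex.norm_real, Real.norm_eq_abs, Complex.norm_ofNat]
    nlinarith [Real.sqrt_nonneg a]
  calc ‖(h + l) ^ 2 + 4 * a‖ = ‖(h ^ 2 + 4 * a) + l * (2 * h + l)‖ := by ring_nf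
    _ ≤ ‖h ^ 2 + 4 * a‖ + ‖(l : ℂ) * (2 * h + l)‖ := norm_add_le _ _
    _ ≤ 15 * ε * a := by nlinarith [Real.sq_sqrt ha.le]

lemma norm_two_mul_flow_add_four_le {p : ℂ} {l v κ : ℝ} (hv : 0 < v)
    (hp : diskExcess v p ≤ 0) (hl : |l| ≤ κ * √v) :
    ‖2 * p * (-(2 / (p - l))) + 4‖ ≤ 4 * κ := by
  have hR : 0 < √v := Real.sqrt_pos.2 hv
  have hfar : √v ≤ ‖p - l‖ :=
    (sqrt_le_im_of_diskExcess_nonpos hv.le hp).trans (by simpa using im_le_norm (p - l))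
  have h0 : p - l ≠ 0 := norm_pos_iff.1 (hR.trans_le hfar)
  have : 2 * p * (-(2 / (p - l))) + 4 = -(4 * l / (p - l)) := by
    field_simp
    ring
  rw [this, norm_neg, norm_div, norm_mul, Complex.norm_ofNat, Complex.norm_real,
    Real.norm_eq_abs, div_le_iff₀ (hR.trans_le hfar)]
  nlinarith [abs_nonneg l]

lemma norm_integrand_le_of_norm_sq_add_le {p : ℂ} {l u A κ : ℝ} (hu : 0 < u)
    (hp : diskExcess u p ≤ 0) (hl : |l| ≤ √u) (hlκ : |l| ≤ κ * √u)
    (hE : ‖p ^ 2 + 4 * u‖ ≤ A * u) :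
    ‖1 / (2 * (u : ℂ)) + 2 / (p - l) ^ 2‖ ≤ (A + 9 * κ) / (2 * u) := by
  have hR : 0 < √u := Real.sqrt_pos.2 hu
  have hRR := Real.sq_sqrt hu.le
  have hfar : √u ≤ ‖p - l‖ :=
    (sqrt_le_im_of_diskExcess_nonpos hu.le hp).trans (by simpa using im_le_norm (p - l))
  have h0 : p - l ≠ 0 := norm_pos_iff.1 (hR.trans_le hfar)
  have hcross : ‖(l : ℂ) * (2 * p - l)‖ ≤ κ * √u * (9 * √u) := by
    rw [norm_mul, Complex.norm_real, Real.norm_eq_abs]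
    refine mul_le_mul hlκ ((norm_sub_le _ _).trans ?_) (norm_nonneg _)
      ((abs_nonneg l).trans hlκ)
    rw [norm_mul, Complex.norm_real, Real.norm_eq_abs, Complex.norm_ofNat]
    linarith [norm_le_of_diskExcess_nonpos hu.le hp]
  have hE' : ‖(p - l) ^ 2 + 4 * u‖ ≤ (A + 9 * κ) * u := by
    calc ‖(p - l) ^ 2 + 4 * u‖ = ‖(p ^ 2 + 4 * u) - l * (2 * p - l)‖ := by ring_nf
      _ ≤ ‖p ^ 2 + 4 * u‖ + ‖(l : ℂ) * (2 * p - l)‖ := norm_sub_le _ _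
      _ ≤ (A + 9 * κ) * u := by nlinarith
  rw [one_div_two_mul_add_two_div_sq hu.ne' h0, norm_div]
  simp only [norm_mul, norm_pow, Complex.norm_real, Complex.norm_ofNat,
    Real.norm_of_nonneg hu.le]
  rw [div_le_div_iff₀ (mul_pos (by positivity) (pow_pos (hR.trans_le hfar) 2)) (by positivity)]
  have hsq : u ≤ ‖p - l‖ ^ 2 := by nlinarith
  have hA : 0 ≤ (A + 9 * κ) * u := (norm_nonneg _).trans hE'
  nlinarith [mul_le_mul_of_nonneg_left hsq (by positivity : (0 : ℝ) ≤ 2 * u)]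

lemma frequently_norm_lt_div_of_intervalIntegrable {E : Type*} [NormedAddCommGroup E]
    {F : ℝ → E} {s ε : ℝ} (hs : 0 < s) (hε : 0 < ε) (hF : IntervalIntegrable F volume 0 s) :
    ∃ᶠ a in 𝓝[>] 0, ‖F a‖ < ε / a := by
  by_contra h
  rw [not_frequently] at h
  have hmem : uIcc (0 : ℝ) s ∈ 𝓝[>] 0 := by
    rw [uIcc_of_le hs.le]; exact Icc_mem_nhdsGT hs
  refine not_intervalIntegrable_of_tendsto_norm_atTop_of_deriv_isBigO_filter (𝓝[>] 0) hmem
    (f := Real.log) ?_ (tendsto_abs_atBot_atTop.comp Real.tendsto_log_nhdsGT_zero) ?_ hF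
  · filter_upwards [self_mem_nhdsWithin] with x hx using Real.differentiableAt_log hx.ne'
  · rw [Real.deriv_log']
    refine Asymptotics.IsBigO.of_bound ε⁻¹ ?_
    filter_upwards [self_mem_nhdsWithin, h] with x (hx : 0 < x) hFx
    rw [norm_inv, Real.norm_of_nonneg hx.le, ← div_le_iff₀' (inv_pos.2 hε), inv_div_inv]
    exact not_lt.1 hFx

lemma norm_integral_le_of_norm_le_rpow {E : Type*} [NormedAddCommGroup E] [NormedSpace ℝ E]
    {F : ℝ → E} {s C δ : ℝ} (hs : 0 ≤ s) (hδ : 0 < δ)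
    (hF : ∀ u ∈ Ioo 0 s, ‖F u‖ ≤ C * u ^ (δ - 1)) :
    ‖∫ u in (0 : ℝ)..s, F u‖ ≤ C * s ^ δ / δ := by
  have hint : IntervalIntegrable (fun u : ℝ => C * u ^ (δ - 1)) volume 0 s :=
    (intervalIntegral.intervalIntegrable_rpow' (by linarith)).const_mul C
  refine (intervalIntegral.norm_integral_le_of_norm_le hs ?_ hint).trans_eq ?_
  · filter_upwards [Measure.ae_ne volume s] with u hne hu
    exact hF u ⟨hu.1, lt_of_le_of_ne hu.2 hne⟩
  · rw [intervalIntegral.integral_const_mul, integral_rpow (by left; linarith),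
      sub_add_cancel, Real.zero_rpow hδ.ne', sub_zero, mul_div_assoc]

lemma abs_le_mul_sqrt_of_abs_le_rpow {x M δ u : ℝ} (hu : 0 < u)
    (h : |x| ≤ M * u ^ (1 / 2 + δ)) : |x| ≤ M * u ^ δ * √u := by
  rwa [Real.rpow_add hu, ← Real.sqrt_eq_rpow, mul_comm √u, ← mul_assoc] at h

section BackwardFlow

variable {P : ℝ → ℂ} {w : ℝ → ℝ} {s M δ : ℝ}

lemma norm_sq_add_sub_le (hP : ∀ u ∈ Ioo 0 s, HasDerivAt P (-(2 / (P u - w u))) u)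
    (hwM : ∀ u ∈ Ioo 0 s, |w u| ≤ M * u ^ (1 / 2 + δ)) (hM : 0 ≤ M) (hδ : 0 ≤ δ)
    {a u : ℝ} (hau : a ≤ u) (hsub : Icc a u ⊆ Ioo 0 s)
    (hdisk : ∀ v ∈ Icc a u, diskExcess v (P v) ≤ 0) :
    ‖(P u ^ 2 + 4 * u) - (P a ^ 2 + 4 * a)‖ ≤ 4 * (M * u ^ δ) * (u - a) := by
  refine norm_image_sub_le_of_norm_deriv_le_segment'
    (f := fun v : ℝ => P v ^ 2 + 4 * (v : ℂ))
    (f' := fun v => 2 * P v * (-(2 / (P v - w v))) + 4) (fun v hv => ?_) (fun v hv => ?_) u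
    ⟨hau, le_rfl⟩
  · have h4 : HasDerivAt (fun v : ℝ => 4 * (v : ℂ)) 4 v := by
      simpa using ((hasDerivAt_id v).ofReal_comp).const_mul (4 : ℂ)
    exact ((((hP v (hsub hv)).pow 2).add h4).congr_deriv (by ring)).hasDerivWithinAt
  · have hv' := hsub (Ico_subset_Icc_self hv)
    refine (norm_two_mul_flow_add_four_le hv'.1 (hdisk v (Ico_subset_Icc_self hv))
      ((abs_le_mul_sqrt_of_abs_le_rpow hv'.1 (hwM v hv')).trans ?_))
    gcongr
    exacts [hv'.1.le, hv.2.le]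

lemma norm_integrand_le_eps
    (hP : ∀ u ∈ Ioo 0 s, HasDerivAt P (-(2 / (P u - w u))) u)
    (him : ∀ u ∈ Ioo 0 s, 0 < (P u).im) (hw : ∀ u ∈ Ioo 0 s, |w u| ≤ √u)
    (hwM : ∀ u ∈ Ioo 0 s, |w u| ≤ M * u ^ (1 / 2 + δ)) (hM : 0 ≤ M) (hδ : 0 < δ)
    (hF : IntervalIntegrable (fun u : ℝ => 1 / (2 * (u : ℂ)) + 2 / (P u - w u) ^ 2) volume 0 s)
    {u ε : ℝ} (hu : u ∈ Ioo 0 s) (hε : ε ∈ Ioc 0 (1 / 100)) :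
    ‖1 / (2 * (u : ℂ)) + 2 / (P u - w u) ^ 2‖ ≤ (15 * ε + 13 * (M * u ^ δ)) / (2 * u) := by
  have hsmall : Tendsto (fun a : ℝ => M * a ^ δ) (𝓝[>] 0) (𝓝 0) := by
    refine tendsto_nhdsWithin_of_tendsto_nhds ?_
    simpa [Real.zero_rpow hδ.ne'] using
      (continuous_const.mul (Real.continuous_rpow_const hδ.le)).tendsto 0 (f := (M * · ^ δ))
  obtain ⟨a, hFa, hMa, ha⟩ := ((frequently_norm_lt_div_of_intervalIntegrable
    (hu.1.trans hu.2) hε.1 hF).and_eventually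
      ((hsmall.eventually_le_const hε.1).and (Ioo_mem_nhdsGT hu.1))).exists
  have hsub : Icc a u ⊆ Ioo 0 s := fun v hv => ⟨ha.1.trans_le hv.1, hv.2.trans_lt hu.2⟩
  have haI : a ∈ Ioo 0 s := hsub ⟨le_rfl, ha.2.le⟩
  have hEa : ‖P a ^ 2 + 4 * a‖ ≤ 15 * ε * a := by
    have h0 : P a - w a ≠ 0 := fun h => by simpa [sub_eq_zero.1 h] using him a haI
    simpa using norm_add_sq_add_le_of_norm_lt ha.1 h0 hε.2 hFa
      ((abs_le_mul_sqrt_of_abs_le_rpow ha.1 (hwM a haI)).trans (by gcongr))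
  have hdisk := diskExcess_nonpos_of_hasDerivAt ha.1 (fun v hv => hP v (hsub hv))
    (fun v hv => hw v (hsub hv)) (diskExcess_nonpos_of_norm_sq_add_le ha.1 (him a haI).le
      (hEa.trans (by nlinarith [hε.2, ha.1])))
  have hEu : ‖P u ^ 2 + 4 * u‖ ≤ (15 * ε + 4 * (M * u ^ δ)) * u := by
    have := norm_sq_add_sub_le hP hwM hM hδ.le ha.2.le hsub hdisk
    have := norm_le_insert' (P u ^ 2 + 4 * u) (P a ^ 2 + 4 * a)
    nlinarith [hε.1, ha.1, ha.2, mul_nonneg hM (Real.rpow_nonneg hu.1.le δ)]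
  exact (norm_integrand_le_of_norm_sq_add_le hu.1 (hdisk u ⟨ha.2.le, le_rfl⟩) (hw u hu)
    (abs_le_mul_sqrt_of_abs_le_rpow hu.1 (hwM u hu)) hEu).trans_eq (by ring)

lemma norm_integrand_le
    (hP : ∀ u ∈ Ioo 0 s, HasDerivAt P (-(2 / (P u - w u))) u)
    (him : ∀ u ∈ Ioo 0 s, 0 < (P u).im) (hw : ∀ u ∈ Ioo 0 s, |w u| ≤ √u)
    (hwM : ∀ u ∈ Ioo 0 s, |w u| ≤ M * u ^ (1 / 2 + δ)) (hM : 0 ≤ M) (hδ : 0 < δ)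
    (hF : IntervalIntegrable (fun u : ℝ => 1 / (2 * (u : ℂ)) + 2 / (P u - w u) ^ 2) volume 0 s)
    {u : ℝ} (hu : u ∈ Ioo 0 s) :
    ‖1 / (2 * (u : ℂ)) + 2 / (P u - w u) ^ 2‖ ≤ 13 / 2 * M * u ^ (δ - 1) := by
  have hlim : Tendsto (fun ε : ℝ => (15 * ε + 13 * (M * u ^ δ)) / (2 * u)) (𝓝[>] 0)
      (𝓝 ((15 * 0 + 13 * (M * u ^ δ)) / (2 * u))) :=
    tendsto_nhdsWithin_of_tendsto_nhds ((by fun_prop : Continuous fun ε : ℝ =>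
      (15 * ε + 13 * (M * u ^ δ)) / (2 * u)).tendsto 0)
  refine (ge_of_tendsto hlim (eventually_of_mem (Ioc_mem_nhdsGT (by norm_num)) fun ε hε =>
    norm_integrand_le_eps hP him hw hwM hM hδ hF hu hε)).trans_eq ?_
  rw [Real.rpow_sub_one hu.1.ne']
  ring

end BackwardFlow

namespace LoewnerData

variable {T : ℝ} {lam : ℝ → ℝ} {γ : ℝ → ℂ} {g g' f : ℝ → ℂ → ℂ}

lemma slit_mem_domain (hL : LoewnerData T lam γ g g' f) {s t : ℝ} (hsT : s ≤ T) (ht : 0 ≤ t)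
    (hts : t < s) : γ s ∈ {w : ℂ | 0 < w.im} \ γ '' Icc 0 t := by
  refine ⟨hL.slit_im_pos s (ht.trans_lt hts) hsT, ?_⟩
  rintro ⟨v, hv, hγ⟩
  have := hL.slit_inj ⟨hv.1, hv.2.trans (hts.le.trans hsT)⟩ ⟨ht.trans hts.le, hsT⟩ hγ
  linarith [hv.2]

lemma hasDerivAt_backward (hL : LoewnerData T lam γ g g' f) {s u : ℝ} (hsT : s ≤ T)
    (hu : u ∈ Ioo 0 s) :
    HasDerivAt (fun u => g (s - u) (γ s)) (-(2 / (g (s - u) (γ s) - lam (s - u)))) u := by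
  have hode := hL.flow_ode (s - u) ⟨by linarith [hu.2], by linarith [hu.1]⟩ (γ s)
    (hL.slit_mem_domain hsT (by linarith [hu.2]) (by linarith [hu.1]))
  simpa using hode.comp_const_sub s u

lemma im_backward_pos (hL : LoewnerData T lam γ g g' f) {s u : ℝ} (hsT : s ≤ T)
    (hu : u ∈ Ioo 0 s) : 0 < (g (s - u) (γ s)).im :=
  (hL.flow_bij (s - u) ⟨by linarith [hu.2], by linarith [hu.1]⟩).mapsTo
    (hL.slit_mem_domain hsT (by linarith [hu.2]) (by linarith [hu.1]))

end LoewnerData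

lemma abs_sub_sub_le_of_holder {lam : ℝ → ℝ} {T s K α : ℝ} (hs : s ∈ Icc 0 T)
    (h : ∀ t₁ ∈ Icc (0:ℝ) T, ∀ t₂ ∈ Icc (0:ℝ) T, |lam t₁ - lam t₂| ≤ K * |t₁ - t₂| ^ α)
    {u : ℝ} (hu : u ∈ Ioo 0 s) : |lam (s - u) - lam s| ≤ K * u ^ α := by
  simpa [abs_of_pos hu.1] using
    h (s - u) ⟨by linarith [hu.2], by linarith [hu.1, hs.2]⟩ s hs

open intervalIntegral in
/-- For a Lip(1/2+δ) driver with `‖λ‖_{Lip(1/2)} ≤ 1`: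
`|L(s)| ≤ cMs^δ/δ` with an absolute constant `c`, where
`L(s) = ∫₀ˢ [1/(2u) + 2/γ(s-u,s)²] du` and `γ(s-u,s) = g_{s-u}(γ(s)) - λ(s-u)`. -/
theorem stmt_14 :
    ∃ c : ℝ, 0 < c ∧
      ∀ (M T δ : ℝ) (lam : ℝ → ℝ) (γ : ℝ → ℂ) (g g' f : ℝ → ℂ → ℂ),
        0 < M → 0 < δ → δ ≤ 1/2 →
        LoewnerData T lam γ g g' f →
        (∀ t₁ ∈ Icc (0:ℝ) T, ∀ t₂ ∈ Icc (0:ℝ) T,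
          |lam t₁ - lam t₂| ≤ |t₁ - t₂| ^ ((1:ℝ)/2)) →
        (∀ t₁ ∈ Icc (0:ℝ) T, ∀ t₂ ∈ Icc (0:ℝ) T,
          |lam t₁ - lam t₂| ≤ M * |t₁ - t₂| ^ ((1:ℝ)/2 + δ)) →
        ∀ s ∈ Icc (0:ℝ) T,
          ‖∫ u in (0:ℝ)..s,
              (1 / (2 * (u:ℂ)) + 2 / (g (s - u) (γ s) - (lam (s - u) : ℂ)) ^ 2)‖
            ≤ c * M * s ^ δ / δ := by
  refine ⟨13 / 2, by norm_num, ?_⟩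
  intro M T δ lam γ g g' f hM hδ _ hL hlip hholder s hs
  set P : ℝ → ℂ := fun u => g (s - u) (γ s) - lam s
  set w : ℝ → ℝ := fun u => lam (s - u) - lam s
  have hPw : ∀ u, g (s - u) (γ s) - (lam (s - u) : ℂ) = P u - w u := fun u => by
    simp only [P, w]; push_cast; ring
  simp_rw [hPw]
  by_cases hF : IntervalIntegrable (fun u : ℝ => 1 / (2 * (u : ℂ)) + 2 / (P u - w u) ^ 2) volume 0 s
  swap
  · rw [intervalIntegral.integral_undef hF, norm_zero]
    have := Real.rpow_nonneg hs.1 δ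
    positivity
  refine norm_integral_le_of_norm_le_rpow hs.1 hδ fun u hu =>
    norm_integrand_le ?_ ?_ ?_ ?_ hM.le hδ hF hu
  · intro u hu
    have := (hL.hasDerivAt_backward hs.2 hu).sub_const (lam s : ℂ)
    rwa [hPw] at this
  · intro u hu
    simpa [P] using hL.im_backward_pos hs.2 hu
  · intro u hu
    simpa [Real.sqrt_eq_rpow] using abs_sub_sub_le_of_holder hs (K := 1) (by simpa using hlip) hu
  · exact fun u hu => abs_sub_sub_le_of_holder hs hholder hu
end
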